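/- arXiv:math/0406563 — 2 statements merged into one kernel-verified Lean document; each statement's English description precedes it below -/
import Mathlib

section
/- Let (H_t)_{t≥0} be a measurable real-valued stochastic process with E[|H_t|] < ∞ for all t, and for 0 ≤ s < u let H_{s,u} := σ(H_r : r ≤ s) ∨ σ(H_v : v ≥ u) be its past-future σ-fields. If H is a harness, then for every T > 0 the process M^{(T)}_t := H_t − ∫_0^t (H_T − H_u)/(T − u) du, 0 ≤ t < T, is a martingale with respect to the filtration (H_{t,T})_{0≤t<T}; that is, for all 0 ≤ s < t < T one has E[M^{(T)}_t | H_{s,T}] = M^{(T)}_s almost surely. -/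
open MeasureTheory ProbabilityTheory Filter Set

/-- The past-future σ-field `σ(H_r : 0 ≤ r ≤ s) ⊔ σ(H_v : v ≥ u)` of a real-valued
process `H` indexed by nonnegative times. -/
def pastFuture {Ω : Type*} [MeasurableSpace Ω] (H : ℝ → Ω → ℝ) (s u : ℝ) :
    MeasurableSpace Ω :=
  (⨆ r ∈ Set.Icc (0 : ℝ) s, MeasurableSpace.comap (H r) inferInstance) ⊔
    (⨆ v ∈ Set.Ici u, MeasurableSpace.comap (H v) inferInstance)

/-- A measurable integrable process `H` is a harness if for all `0 ≤ s < t < u`,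
`E[H_t | H_{s,u}] = ((u−t) H_s + (t−s) H_u)/(u−s)` almost surely. -/
def IsHarness {Ω : Type*} [MeasurableSpace Ω] (μ : Measure Ω) (H : ℝ → Ω → ℝ) : Prop :=
  ∀ s t u : ℝ, 0 ≤ s → s < t → t < u →
    μ[H t | pastFuture H s u] =ᵐ[μ]
      fun ω => ((u - t) * H s ω + (t - s) * H u ω) / (u - s)

open Function

/-! For `s < u < T` the harness property gives
`E[(H_T - H_u)/(T - u) | H_{s,T}] = (H_T - H_s)/(T - s)`, independently of `u`. Integrating over
`u ∈ (s, t]` (Fubini) shows that the compensator increment has the same conditional expectation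
`(t - s)(H_T - H_s)/(T - s)` as `H_t - H_s`. The compensator up to time `s` is
`H_{s,T}`-measurable because every integrand is; the integrand is jointly measurable only for the
ambient σ-algebra, so this is shown by duality, testing against `E[1_A | H_{s,T}]` instead of
`1_A`. Fubini applies on `(0, t] × Ω` thanks to the uniform bound
`(T - m) E|H_u| ≤ T E|H_m| + m E|H_T|` for `0 ≤ u < m < T`, again a consequence of the harness
property. -/

section FubiniConditioning

variable {α Ω : Type*} [MeasurableSpace α] {ν : Measure α} [SFinite ν] {F : α → Ω → ℝ}

theorem integral_integral_mul_swap_of_ae_bdd [MeasurableSpace Ω] {μ : Measure Ω} [SFinite μ]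
    (hF : Integrable (uncurry F) (ν.prod μ)) {g : Ω → ℝ} {C : ℝ}
    (hg : AEStronglyMeasurable g μ) (hgC : ∀ᵐ ω ∂μ, ‖g ω‖ ≤ C) :
    ∫ ω, (∫ a, F a ω ∂ν) * g ω ∂μ = ∫ a, ∫ ω, F a ω * g ω ∂μ ∂ν := by
  have hFg : Integrable (uncurry fun a ω => F a ω * g ω) (ν.prod μ) :=
    hF.mul_bdd (hg.comp_quasiMeasurePreserving Measure.quasiMeasurePreserving_snd)
      (Measure.quasiMeasurePreserving_snd.ae hgC)
  simp_rw [← integral_mul_const]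
  exact (integral_integral_swap hFg).symm

theorem integral_mul_indicator_one [MeasurableSpace Ω] {μ : Measure Ω} (f : Ω → ℝ) {A : Set Ω}
    (hA : MeasurableSet A) : ∫ ω, f ω * A.indicator 1 ω ∂μ = ∫ ω in A, f ω ∂μ := by
  rw [← integral_indicator hA]
  congr 1 with ω
  by_cases h : ω ∈ A <;> simp [h]

theorem integral_mul_condExp_of_stronglyMeasurable {m m0 : MeasurableSpace Ω} {μ : Measure[m0] Ω}
    (hm : m ≤ m0) [SigmaFinite (μ.trim hm)] {f g : Ω → ℝ} (hf : StronglyMeasurable[m] f)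
    (hfg : Integrable (f * g) μ) (hg : Integrable g μ) :
    ∫ ω, f ω * μ[g | m] ω ∂μ = ∫ ω, f ω * g ω ∂μ :=
  (integral_congr_ae (condExp_mul_of_stronglyMeasurable_left hf hfg hg)).symm.trans
    (integral_condExp hm)

theorem aestronglyMeasurable_integral_of_ae_stronglyMeasurable {m m0 : MeasurableSpace Ω}
    {μ : Measure[m0] Ω} (hm : m ≤ m0) [SigmaFinite (μ.trim hm)]
    (hF : Integrable (uncurry F) (ν.prod μ)) (hFm : ∀ᵐ a ∂ν, StronglyMeasurable[m] (F a)) :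
    AEStronglyMeasurable[m] (fun ω => ∫ a, F a ω ∂ν) μ := by
  have := SigmaFinite.of_trim (μ := μ) hm
  set J := fun ω => ∫ a, F a ω ∂ν
  have hJ : Integrable J μ := hF.integral_prod_right
  suffices J =ᵐ[μ] μ[J | m] from stronglyMeasurable_condExp.aestronglyMeasurable.congr this.symm
  refine hJ.ae_eq_of_forall_setIntegral_eq _ _ integrable_condExp fun A hA hμA => ?_
  set φ := μ[A.indicator (1 : Ω → ℝ) | m]
  have h1 : Integrable (A.indicator (1 : Ω → ℝ)) μ :=
    (integrableOn_const hμA.ne).integrable_indicator hA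
  have h1_bdd : ∀ᵐ ω ∂μ, ‖A.indicator (1 : Ω → ℝ) ω‖ ≤ 1 :=
    ae_of_all _ fun ω => by by_cases h : ω ∈ A <;> simp [h]
  have hφ_bdd : ∀ᵐ ω ∂μ, ‖φ ω‖ ≤ 1 := ae_bdd_norm_condExp_of_ae_bdd_norm h1_bdd
  have hφ : AEStronglyMeasurable φ μ := integrable_condExp.aestronglyMeasurable
  have hslice : ∀ᵐ a ∂ν, ∫ ω, F a ω * A.indicator 1 ω ∂μ = ∫ ω, F a ω * φ ω ∂μ := by
    filter_upwards [hFm, hF.prod_right_ae] with a hFa_m hFa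
    exact (integral_mul_condExp_of_stronglyMeasurable hm hFa_m
      (hFa.mul_bdd h1.aestronglyMeasurable h1_bdd) h1).symm
  calc ∫ ω in A, J ω ∂μ = ∫ ω, J ω * A.indicator 1 ω ∂μ := (integral_mul_indicator_one J hA).symm
    _ = ∫ a, ∫ ω, F a ω * A.indicator 1 ω ∂μ ∂ν :=
      integral_integral_mul_swap_of_ae_bdd hF h1.aestronglyMeasurable h1_bdd
    _ = ∫ a, ∫ ω, F a ω * φ ω ∂μ ∂ν := integral_congr_ae hslice
    _ = ∫ ω, J ω * φ ω ∂μ := (integral_integral_mul_swap_of_ae_bdd hF hφ hφ_bdd).symm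
    _ = ∫ ω, φ ω * μ[J | m] ω ∂μ := by
      simp_rw [mul_comm _ (φ _)]
      exact (integral_mul_condExp_of_stronglyMeasurable hm stronglyMeasurable_condExp
        (hJ.bdd_mul hφ hφ_bdd) hJ).symm
    _ = ∫ ω, μ[J | m] ω * A.indicator 1 ω ∂μ := by
      simp_rw [mul_comm (φ _)]
      exact integral_mul_condExp_of_stronglyMeasurable hm stronglyMeasurable_condExp
        (integrable_condExp.mul_bdd h1.aestronglyMeasurable h1_bdd) h1
    _ = ∫ ω in A, μ[J | m] ω ∂μ := integral_mul_indicator_one _ hA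

end FubiniConditioning

section Harness

variable {Ω : Type*} [MeasurableSpace Ω] {μ : Measure Ω} {H : ℝ → Ω → ℝ}

theorem pastFuture_le (hH : ∀ r, Measurable (H r)) (s u : ℝ) :
    pastFuture H s u ≤ ‹MeasurableSpace Ω› :=
  sup_le (iSup₂_le fun r _ => measurable_iff_comap_le.mp (hH r))
    (iSup₂_le fun v _ => measurable_iff_comap_le.mp (hH v))

theorem measurable_pastFuture_of_mem_Icc {r s : ℝ} (hr : r ∈ Icc 0 s) (u : ℝ) :
    Measurable[pastFuture H s u] (H r) :=
  measurable_iff_comap_le.mpr ((le_iSup₂ (f := fun r (_ : r ∈ Icc (0 : ℝ) s) =>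
    MeasurableSpace.comap (H r) inferInstance) r hr).trans le_sup_left)

theorem measurable_pastFuture_of_le {u v : ℝ} (huv : u ≤ v) (s : ℝ) :
    Measurable[pastFuture H s u] (H v) :=
  measurable_iff_comap_le.mpr ((le_iSup₂ (f := fun v (_ : v ∈ Ici u) =>
    MeasurableSpace.comap (H v) inferInstance) v huv).trans le_sup_right)

variable (H) in
noncomputable def harnessDrift (T u : ℝ) (ω : Ω) : ℝ := (H T ω - H u ω) / (T - u)

theorem measurable_harnessDrift (hH : Measurable (uncurry H)) (T : ℝ) :
    Measurable (uncurry (harnessDrift H T)) :=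
  ((hH.comp (measurable_const.prodMk measurable_snd)).sub hH).div
    (measurable_const.sub measurable_fst)

theorem IsHarness.mul_integral_norm_le (hH : IsHarness μ H) {u m T : ℝ}
    (hHT : Integrable (H T) μ) (hu : 0 ≤ u) (hum : u < m) (hmT : m < T) :
    (T - m) * ∫ ω, ‖H u ω‖ ∂μ ≤ T * ∫ ω, ‖H m ω‖ ∂μ + m * ∫ ω, ‖H T ω‖ ∂μ := by
  set Y := μ[H m | pastFuture H u T]
  have hHu : ∀ᵐ ω ∂μ, (T - m) * ‖H u ω‖ = ‖(T - u) * Y ω - (m - u) * H T ω‖ := by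
    filter_upwards [hH u m T hu hum hmT] with ω hω
    have hTu : T - u ≠ 0 := by linarith
    have hsolve : (T - u) * Y ω - (m - u) * H T ω = (T - m) * H u ω := by
      rw [show Y ω = _ from hω]
      field_simp
      ring
    rw [hsolve, norm_mul, Real.norm_of_nonneg (by linarith : 0 ≤ T - m)]
  calc (T - m) * ∫ ω, ‖H u ω‖ ∂μ = ∫ ω, ‖(T - u) * Y ω - (m - u) * H T ω‖ ∂μ := by
        rw [← integral_const_mul]; exact integral_congr_ae hHu
    _ ≤ ∫ ω, ((T - u) * ‖Y ω‖ + (m - u) * ‖H T ω‖) ∂μ := by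
        refine integral_mono_of_nonneg (ae_of_all _ fun ω => norm_nonneg _)
          ((integrable_condExp.norm.const_mul _).add (hHT.norm.const_mul _))
          (ae_of_all _ fun ω => (norm_sub_le _ _).trans_eq ?_)
        rw [norm_mul, norm_mul, Real.norm_of_nonneg (by linarith : 0 ≤ T - u),
          Real.norm_of_nonneg (by linarith : 0 ≤ m - u)]
    _ = (T - u) * ∫ ω, ‖Y ω‖ ∂μ + (m - u) * ∫ ω, ‖H T ω‖ ∂μ := by
        rw [integral_add (integrable_condExp.norm.const_mul _) (hHT.norm.const_mul _),
          integral_const_mul, integral_const_mul]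
    _ ≤ T * ∫ ω, ‖H m ω‖ ∂μ + m * ∫ ω, ‖H T ω‖ ∂μ :=
        add_le_add
          (mul_le_mul (by linarith) (integral_norm_condExp_le _)
            (integral_nonneg fun _ => norm_nonneg _) (by linarith))
          (mul_le_mul_of_nonneg_right (by linarith) (integral_nonneg fun _ => norm_nonneg _))

variable [IsFiniteMeasure μ]

theorem IsHarness.setIntegral_eq (hH : IsHarness μ H) (hHm : ∀ r, Measurable (H r))
    (hint : ∀ r, 0 ≤ r → Integrable (H r) μ) {s t u : ℝ} (hs : 0 ≤ s) (hst : s < t)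
    (htu : t < u) {A : Set Ω} (hA : MeasurableSet[pastFuture H s u] A) :
    ∫ ω in A, H t ω ∂μ =
      ((u - t) * ∫ ω in A, H s ω ∂μ + (t - s) * ∫ ω in A, H u ω ∂μ) / (u - s) := by
  have hle := pastFuture_le hHm s u
  rw [← setIntegral_condExp hle (hint t (hs.trans hst.le)) hA,
    setIntegral_congr_ae (hle _ hA) ((hH s t u hs hst htu).mono fun ω hω _ => hω),
    integral_div, integral_add ((hint s hs).integrableOn.const_mul _)
      ((hint u (by linarith)).integrableOn.const_mul _), integral_const_mul, integral_const_mul]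

theorem IsHarness.setIntegral_harnessDrift (hH : IsHarness μ H) (hHm : ∀ r, Measurable (H r))
    (hint : ∀ r, 0 ≤ r → Integrable (H r) μ) {s r T : ℝ} (hs : 0 ≤ s) (hsr : s < r)
    (hrT : r < T) {A : Set Ω} (hA : MeasurableSet[pastFuture H s T] A) :
    ∫ ω in A, harnessDrift H T r ω ∂μ =
      (∫ ω in A, H T ω ∂μ - ∫ ω in A, H s ω ∂μ) / (T - s) := by
  have hTr : T - r ≠ 0 := by linarith
  have hTs : T - s ≠ 0 := by linarith
  simp only [harnessDrift]
  rw [integral_div, integral_sub (hint T (by linarith)).integrableOn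
    (hint r (by linarith)).integrableOn, hH.setIntegral_eq hHm hint hs hsr hrT hA]
  field_simp
  ring

theorem IsHarness.integrable_harnessDrift (hH : IsHarness μ H)
    (hmeas : Measurable (uncurry H)) (hint : ∀ r, 0 ≤ r → Integrable (H r) μ)
    {b T : ℝ} (hb : 0 ≤ b) (hbT : b < T) :
    Integrable (uncurry (harnessDrift H T)) ((volume.restrict (Ioc 0 b)).prod μ) := by
  have hHT := hint T (by linarith)
  obtain ⟨m, hbm, hmT⟩ := exists_between hbT
  set C := (T * ∫ ω, ‖H m ω‖ ∂μ + m * ∫ ω, ‖H T ω‖ ∂μ) / (T - m)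
  have hdrift_le : ∀ u ∈ Ioc 0 b,
      ∫ ω, ‖harnessDrift H T u ω‖ ∂μ ≤ (∫ ω, ‖H T ω‖ ∂μ + C) / (T - b) := by
    rintro u ⟨hu, hub⟩
    have hHu := hint u hu.le
    have hC : ∫ ω, ‖H u ω‖ ∂μ ≤ C := by
      rw [le_div_iff₀ (by linarith), mul_comm]
      exact hH.mul_integral_norm_le hHT hu.le (by linarith) (by linarith)
    calc ∫ ω, ‖harnessDrift H T u ω‖ ∂μ ≤ ∫ ω, (‖H T ω‖ + ‖H u ω‖) / (T - b) ∂μ := by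
          refine integral_mono_of_nonneg (ae_of_all _ fun ω => norm_nonneg _)
            ((hHT.norm.add hHu.norm).div_const _) (ae_of_all _ fun ω => ?_)
          simp only [harnessDrift]
          rw [norm_div, Real.norm_of_nonneg (by linarith : 0 ≤ T - u)]
          exact div_le_div₀ (by positivity) (norm_sub_le _ _) (by linarith) (by linarith)
      _ ≤ (∫ ω, ‖H T ω‖ ∂μ + C) / (T - b) := by
          rw [integral_div, integral_add hHT.norm hHu.norm]
          gcongr
  have hmeas_drift := (measurable_harnessDrift hmeas T).aestronglyMeasurable
    (μ := (volume.restrict (Ioc 0 b)).prod μ)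
  refine (integrable_prod_iff hmeas_drift).mpr ⟨?_, ?_⟩
  · exact (ae_restrict_iff' measurableSet_Ioc).mpr
      (ae_of_all _ fun u hu => by
        show Integrable (fun ω => (H T ω - H u ω) / (T - u)) μ
        exact (hHT.sub (hint u hu.1.le)).div_const _)
  · exact Integrable.mono' (integrable_const _) hmeas_drift.norm.integral_prod_right'
      ((ae_restrict_iff' measurableSet_Ioc).mpr (ae_of_all _ fun u hu =>
        (Real.norm_of_nonneg (integral_nonneg fun _ => norm_nonneg _)).trans_le
          (hdrift_le u hu)))

theorem IsHarness.integrable_intervalIntegral_harnessDrift (hH : IsHarness μ H)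
    (hmeas : Measurable (uncurry H)) (hint : ∀ r, 0 ≤ r → Integrable (H r) μ)
    {b T : ℝ} (hb : 0 ≤ b) (hbT : b < T) :
    Integrable (fun ω => ∫ u in 0..b, harnessDrift H T u ω) μ := by
  simp_rw [intervalIntegral.integral_of_le hb]
  exact (hH.integrable_harnessDrift hmeas hint hb hbT).integral_prod_right

theorem IsHarness.aestronglyMeasurable_intervalIntegral_harnessDrift (hH : IsHarness μ H)
    (hmeas : Measurable (uncurry H)) (hint : ∀ r, 0 ≤ r → Integrable (H r) μ)
    {s T : ℝ} (hs : 0 ≤ s) (hsT : s < T) :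
    AEStronglyMeasurable[pastFuture H s T] (fun ω => ∫ u in 0..s, harnessDrift H T u ω) μ := by
  have hHm : ∀ r, Measurable (H r) := fun _ => hmeas.of_uncurry_left
  simp_rw [intervalIntegral.integral_of_le hs]
  refine aestronglyMeasurable_integral_of_ae_stronglyMeasurable (pastFuture_le hHm s T)
    (hH.integrable_harnessDrift hmeas hint hs hsT) ?_
  refine (ae_restrict_iff' measurableSet_Ioc).mpr (ae_of_all _ fun u hu => ?_)
  exact (((measurable_pastFuture_of_le le_rfl s).sub
    (measurable_pastFuture_of_mem_Icc ⟨hu.1.le, hu.2⟩ T)).div_const _).stronglyMeasurable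

theorem IsHarness.setIntegral_intervalIntegral_harnessDrift_sub (hH : IsHarness μ H)
    (hmeas : Measurable (uncurry H)) (hint : ∀ r, 0 ≤ r → Integrable (H r) μ)
    {s t T : ℝ} (hs : 0 ≤ s) (hst : s < t) (htT : t < T) {A : Set Ω}
    (hA : MeasurableSet[pastFuture H s T] A) :
    ∫ ω in A, (∫ u in 0..t, harnessDrift H T u ω) ∂μ
        - ∫ ω in A, (∫ u in 0..s, harnessDrift H T u ω) ∂μ =
      (t - s) * ((∫ ω in A, H T ω ∂μ - ∫ ω in A, H s ω ∂μ) / (T - s)) := by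
  have hHm : ∀ r, Measurable (H r) := fun _ => hmeas.of_uncurry_left
  have hswap : ∀ r, 0 ≤ r → r < T →
      Integrable (uncurry (harnessDrift H T)) ((volume.restrict (uIoc 0 r)).prod (μ.restrict A)) :=
    fun r hr hrT => by
      rw [uIoc_of_le hr]
      exact (hH.integrable_harnessDrift hmeas hint hr hrT).mono_measure
        (Measure.prod_mono le_rfl Measure.restrict_le_self)
  have hii : ∀ r, 0 ≤ r → r < T →
      IntervalIntegrable (fun u => ∫ ω in A, harnessDrift H T u ω ∂μ) volume 0 r :=
    fun r hr hrT => intervalIntegrable_iff.mpr (hswap r hr hrT).integral_prod_left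
  rw [← intervalIntegral_integral_swap (hswap t (by linarith) htT),
    ← intervalIntegral_integral_swap (hswap s hs (by linarith)),
    intervalIntegral.integral_interval_sub_left (hii t (by linarith) htT) (hii s hs (by linarith)),
    intervalIntegral.integral_congr_ae (g := fun _ => _) (ae_of_all _ fun u hu =>
      hH.setIntegral_harnessDrift hHm hint hs (uIoc_of_le hst.le ▸ hu).1
        ((uIoc_of_le hst.le ▸ hu).2.trans_lt htT) hA),
    intervalIntegral.integral_const, smul_eq_mul]

theorem IsHarness.setIntegral_sub_intervalIntegral_harnessDrift (hH : IsHarness μ H)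
    (hmeas : Measurable (uncurry H)) (hint : ∀ r, 0 ≤ r → Integrable (H r) μ)
    {s t T : ℝ} (hs : 0 ≤ s) (hst : s < t) (htT : t < T) {A : Set Ω}
    (hA : MeasurableSet[pastFuture H s T] A) :
    ∫ ω in A, (H t ω - ∫ u in 0..t, harnessDrift H T u ω) ∂μ =
      ∫ ω in A, (H s ω - ∫ u in 0..s, harnessDrift H T u ω) ∂μ := by
  have hTs : T - s ≠ 0 := by linarith
  have hHt := hH.setIntegral_eq (fun _ => hmeas.of_uncurry_left) hint hs hst htT hA
  have hJ := hH.setIntegral_intervalIntegral_harnessDrift_sub hmeas hint hs hst htT hA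
  rw [integral_sub (hint s hs).integrableOn
      (hH.integrable_intervalIntegral_harnessDrift hmeas hint hs (hst.trans htT)).integrableOn,
    integral_sub (hint t (by linarith)).integrableOn
      (hH.integrable_intervalIntegral_harnessDrift hmeas hint (by linarith) htT).integrableOn,
    hHt]
  field_simp at hJ ⊢
  linear_combination -hJ

end Harness

theorem harness_decomposition_martingale_general
    {Ω : Type*} [MeasurableSpace Ω] (μ : Measure Ω) [IsProbabilityMeasure μ]
    (H : ℝ → Ω → ℝ)
    (hmeas : Measurable fun p : ℝ × Ω => H p.1 p.2)
    (hint : ∀ t : ℝ, 0 ≤ t → Integrable (H t) μ)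
    (hH : IsHarness μ H)
    (T : ℝ)
    (M : ℝ → Ω → ℝ)
    (hM : ∀ t ω, M t ω = H t ω - ∫ u in (0 : ℝ)..t, (H T ω - H u ω) / (T - u)) :
    ∀ s t : ℝ, 0 ≤ s → s < t → t < T →
      μ[M t | pastFuture H s T] =ᵐ[μ] M s := by
  intro s t hs hst htT
  have hM' : ∀ r, M r = fun ω => H r ω - ∫ u in 0..r, harnessDrift H T u ω :=
    fun r => funext (hM r)
  have hM_int : ∀ r, 0 ≤ r → r < T → Integrable (M r) μ := fun r hr hrT => by
    rw [hM' r]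
    exact (hint r hr).sub (hH.integrable_intervalIntegral_harnessDrift hmeas hint hr hrT)
  have hMs_meas : AEStronglyMeasurable[pastFuture H s T] (M s) μ := by
    rw [hM' s]
    exact (measurable_pastFuture_of_mem_Icc ⟨hs, le_rfl⟩ T).aestronglyMeasurable.sub
      (hH.aestronglyMeasurable_intervalIntegral_harnessDrift hmeas hint hs (hst.trans htT))
  refine (ae_eq_condExp_of_forall_setIntegral_eq
    (pastFuture_le (fun _ => hmeas.of_uncurry_left) s T) (hM_int t (by linarith) htT)
    (fun A _ _ => (hM_int s hs (hst.trans htT)).integrableOn)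
    (fun A hA _ => ?_) hMs_meas).symm
  rw [hM' s, hM' t]
  exact (hH.setIntegral_sub_intervalIntegral_harnessDrift hmeas hint hs hst htT hA).symm

/-- If `H` is a harness, then for every `T > 0` the process
`M^{(T)}_t = H_t − ∫_0^t (H_T − H_u)/(T − u) du`, `0 ≤ t < T`, is a martingale with
respect to the filtration `(H_{t,T})_{0 ≤ t < T}`: for all `0 ≤ s < t < T`,
`E[M^{(T)}_t | H_{s,T}] = M^{(T)}_s` almost surely. -/
theorem harness_decomposition_martingale
    {Ω : Type*} [MeasurableSpace Ω] (μ : Measure Ω) [IsProbabilityMeasure μ]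
    (H : ℝ → Ω → ℝ)
    (hmeas : Measurable fun p : ℝ × Ω => H p.1 p.2)
    (hint : ∀ t : ℝ, 0 ≤ t → Integrable (H t) μ)
    (hH : IsHarness μ H)
    (T : ℝ) (hT : 0 < T)
    (M : ℝ → Ω → ℝ)
    (hM : ∀ t ω, M t ω = H t ω - ∫ u in (0 : ℝ)..t, (H T ω - H u ω) / (T - u))
    (hintM : ∀ t : ℝ, 0 ≤ t → t < T →
      Integrable (fun ω => ∫ u in (0 : ℝ)..t, (H T ω - H u ω) / (T - u)) μ) :
    ∀ s t : ℝ, 0 ≤ s → s < t → t < T →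
      μ[M t | pastFuture H s T] =ᵐ[μ] M s :=
  harness_decomposition_martingale_general μ H hmeas hint hH T M hM
end

section
/- Let σ ≥ 0, let ν be a Borel measure on ℝ∖{0} with ∫ |z| ν(dz) < ∞, let u > 0, and let φ_u : ℝ → ℝ be an integrable probability density which is differentiable with φ'_u integrable and with x ↦ x·φ_u(x) integrable. Suppose that for all λ ∈ ℝ, ∫ e^{iλx} φ_u(x) dx = e^{−uΦ(λ)}, where Φ : ℝ → ℂ is differentiable with Φ'(λ) = σ²λ − i ∫ z e^{iλz} ν(dz). Then for Lebesgue-almost every x ∈ ℝ, −σ² φ'_u(x) + ∫ z φ_u(x − z) ν(dz) = (x/u) φ_u(x). -/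
/-!
Apply the transform `χ_f(λ) = ∫ e^{iλx} f(x) dx` to both sides. Integration by parts gives
`χ_{φ'}(λ) = -iλ χ_φ(λ)`, differentiation under the integral sign gives
`χ_{xφ}(λ) = -i (d/dλ) e^{-uΦ(λ)} = iuΦ'(λ) e^{-uΦ(λ)}`, and Fubini gives
`χ_{∫ z φ(· - z) ν(dz)}(λ) = (∫ z e^{iλz} ν(dz)) e^{-uΦ(λ)}`. Inserting the formula for `Φ'`,
the transforms of the two sides coincide, and the Fourier transform is injective on `L¹(ℝ)`.
-/

open MeasureTheory Filter Set

open Complex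
open scoped FourierTransform SchwartzMap

/-- Away from `0` the measure `ν` is σ-finite because the identity is integrable; on `{0}` it is
a multiple of a Dirac mass. -/
theorem MeasureTheory.sFinite_of_integrable_id {E : Type*} [NormedAddCommGroup E]
    [MeasurableSpace E] [MeasurableSingletonClass E] {ν : Measure E}
    (hν : Integrable (fun z : E => z) ν) : SFinite ν := by
  obtain ⟨t, ht, hzero, _⟩ := hν.aefinStronglyMeasurable.exists_set_sigmaFinite
  have hcompl : ν.restrict tᶜ = ν.restrict tᶜ {0} • Measure.dirac 0 := by
    rw [← Measure.restrict_singleton, Measure.restrict_eq_self_of_ae_mem (s := {0}) hzero]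
  rw [← Measure.restrict_add_restrict_compl (μ := ν) ht, hcompl]
  infer_instance

theorem MeasureTheory.Integrable.ae_eq_zero_of_fourier_eq_zero {V : Type*}
    [NormedAddCommGroup V] [InnerProductSpace ℝ V] [FiniteDimensional ℝ V]
    [MeasurableSpace V] [BorelSpace V] {h : V → ℂ} (hh : Integrable h) (hF : 𝓕 h = 0) :
    h =ᵐ[volume] 0 := by
  refine ae_eq_zero_of_integral_contDiff_smul_eq_zero hh.locallyIntegrable fun g hg hgs => ?_
  let ψ : 𝓢(V, ℂ) :=
    (hgs.comp_left ofReal_zero).toSchwartzMap (ofRealCLM.contDiff.comp hg)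
  let Ψ : 𝓢(V, ℂ) := 𝓕⁻ ψ
  have hΨ : 𝓕 ⇑Ψ = fun x => (g x : ℂ) := by
    rw [← SchwartzMap.fourier_coe, FourierInvPair.fourier_fourierInv_eq]; rfl
  calc ∫ x, g x • h x = ∫ x, 𝓕 ⇑Ψ x * h x := by simp [hΨ, Complex.real_smul]
    _ = ∫ x, Ψ x * 𝓕 h x := by
        simpa using! VectorFourier.integral_bilin_fourierIntegral_eq_flip (.mul ℂ ℂ)
          (L := innerₗ V) Real.continuous_fourierChar continuous_inner Ψ.integrable hh
    _ = 0 := by simp [hF]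

/-- The characteristic function `∫ e^{ilx} d(f • μ)(x)` of the complex measure `f • μ`, in the
probabilists' convention; Mathlib's `𝓕` uses `e^{-2πiwx}` instead (`charTransform_eq_fourier`). -/
noncomputable def charTransform (μ : Measure ℝ) (f : ℝ → ℂ) (l : ℝ) : ℂ :=
  ∫ x, cexp (I * l * x) * f x ∂μ

section charTransform

variable {μ : Measure ℝ} {f g : ℝ → ℂ}

theorem integrable_exp_I_mul_mul (hf : Integrable f μ) (l : ℝ) :
    Integrable (fun x : ℝ => cexp (I * l * x) * f x) μ :=
  hf.bdd_mul (c := 1) (by fun_prop) (.of_forall fun x => by simp [norm_exp])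

theorem charTransform_add (hf : Integrable f μ) (hg : Integrable g μ) (l : ℝ) :
    charTransform μ (fun x => f x + g x) l = charTransform μ f l + charTransform μ g l := by
  simp only [charTransform, mul_add]
  exact integral_add (integrable_exp_I_mul_mul hf l) (integrable_exp_I_mul_mul hg l)

theorem charTransform_sub (hf : Integrable f μ) (hg : Integrable g μ) (l : ℝ) :
    charTransform μ (fun x => f x - g x) l = charTransform μ f l - charTransform μ g l := by
  simp only [charTransform, mul_sub]
  exact integral_sub (integrable_exp_I_mul_mul hf l) (integrable_exp_I_mul_mul hg l)

theorem charTransform_const_mul (c : ℂ) (l : ℝ) :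
    charTransform μ (fun x => c * f x) l = c * charTransform μ f l := by
  simp only [charTransform, mul_left_comm _ c, integral_const_mul]

theorem charTransform_eq_fourier (f : ℝ → ℂ) (l : ℝ) :
    charTransform volume f l = 𝓕 f (-l / (2 * Real.pi)) := by
  rw [charTransform, Real.fourier_real_eq_integral_exp_smul]
  refine integral_congr_ae (.of_forall fun x => ?_)
  simp only [smul_eq_mul]
  congr 2
  push_cast
  field_simp

theorem ae_eq_zero_of_charTransform_eq_zero {h : ℝ → ℂ} (hh : Integrable h)
    (h0 : ∀ l, charTransform volume h l = 0) : h =ᵐ[volume] 0 :=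
  hh.ae_eq_zero_of_fourier_eq_zero <| funext fun w => by
    have h0w := h0 (-2 * Real.pi * w)
    rwa [charTransform_eq_fourier, neg_mul, neg_mul, neg_neg,
      mul_div_cancel_left₀ _ (by positivity)] at h0w

theorem charTransform_deriv {f' : ℝ → ℂ} (hf : Integrable f)
    (hderiv : ∀ x, HasDerivAt f (f' x) x) (hf' : Integrable f') (l : ℝ) :
    charTransform volume f' l = -(I * l) * charTransform volume f l := by
  have hexp : ∀ x : ℝ, HasDerivAt (fun x : ℝ => cexp (I * l * x))
      (I * l * cexp (I * l * x)) x := fun x => by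
    simpa [mul_comm] using ((hasDerivAt_id x).ofReal_comp.const_mul (I * l)).cexp
  have hint : Integrable fun x : ℝ => I * l * cexp (I * l * x) * f x := by
    simpa only [mul_assoc] using (integrable_exp_I_mul_mul hf l).const_mul (I * l)
  rw [charTransform, integral_mul_deriv_eq_deriv_mul_of_integrable (fun x _ => hexp x)
    (fun x _ => hderiv x) (integrable_exp_I_mul_mul hf' l) hint (integrable_exp_I_mul_mul hf l),
    charTransform, ← integral_const_mul, ← integral_neg]
  simp only [mul_assoc, neg_mul]

theorem hasDerivAt_charTransform (hf : Integrable f) (hxf : Integrable fun x : ℝ => x * f x)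
    (l : ℝ) :
    HasDerivAt (charTransform volume f) (I * charTransform volume (fun x => x * f x) l) l := by
  rw [charTransform, ← integral_const_mul]
  refine (hasDerivAt_integral_of_dominated_loc_of_deriv_le (bound := fun x : ℝ => ‖x * f x‖)
    (F' := fun l x => I * (cexp (I * l * x) * (x * f x)))
    univ_mem (.of_forall fun l => (integrable_exp_I_mul_mul hf l).aestronglyMeasurable)
    (integrable_exp_I_mul_mul hf l)
    ((integrable_exp_I_mul_mul hxf l).const_mul I).aestronglyMeasurable
    (.of_forall fun x l _ => by simp [norm_exp]) hxf.norm
    (.of_forall fun x l _ => ?_)).2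
  simpa [mul_comm, mul_assoc, mul_left_comm] using
    (((hasDerivAt_id l).ofReal_comp.mul_const (I * x)).cexp).mul_const (f x)

theorem charTransform_id_mul_of_eq_cexp (hf : Integrable f)
    (hxf : Integrable fun x : ℝ => x * f x) {Ψ Ψ' : ℝ → ℂ} (hΨ : ∀ l, HasDerivAt Ψ (Ψ' l) l)
    (hfΨ : ∀ l, charTransform volume f l = cexp (Ψ l)) (l : ℝ) :
    charTransform volume (fun x => x * f x) l = -I * Ψ' l * cexp (Ψ l) := by
  have hderiv := hasDerivAt_charTransform hf hxf l
  rw [funext hfΨ] at hderiv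
  apply mul_left_cancel₀ I_ne_zero
  rw [hderiv.unique (hΨ l).cexp]
  linear_combination (Ψ' l * cexp (Ψ l)) * I_sq

theorem charTransform_integral_mul_sub {ν : Measure ℝ} [SFinite ν] (hg : Integrable g ν)
    (hf : Integrable f) (l : ℝ) :
    charTransform volume (fun x => ∫ z, g z * f (x - z) ∂ν) l =
      charTransform ν g l * charTransform volume f l := by
  set g' := fun z : ℝ => cexp (I * l * z) * g z
  set f' := fun x : ℝ => cexp (I * l * x) * f x
  have hsplit : ∀ x z : ℝ, cexp (I * l * x) * (g z * f (x - z)) = g' z * f' (x - z) := by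
    intro x z
    simp only [g', f', ← mul_assoc, mul_right_comm _ (g z), ← exp_add]
    congr 3; push_cast; ring
  calc charTransform volume (fun x => ∫ z, g z * f (x - z) ∂ν) l
      = ∫ x : ℝ, ∫ z : ℝ, g' z * f' (x - z) ∂ν := by
        simp_rw [charTransform, ← integral_const_mul, hsplit]
    _ = ∫ z : ℝ, (∫ x : ℝ, g' z * f' (x - z)) ∂ν := integral_integral_swap <|
        (integrable_exp_I_mul_mul hg l).convolution_integrand (.mul ℂ ℂ)
          (integrable_exp_I_mul_mul hf l)
    _ = ∫ z : ℝ, g' z * (∫ x : ℝ, f' x) ∂ν := by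
        simp_rw [integral_const_mul, integral_sub_right_eq_self]
    _ = _ := integral_mul_const _ _

end charTransform

theorem levy_density_identity_general
    (σ : ℝ)
    (ν : Measure ℝ)
    (hν_int : Integrable (fun z : ℝ => z) ν)
    (u : ℝ) (hu : 0 < u)
    (φu φu' : ℝ → ℝ)
    (hφ_int : Integrable φu)
    (hφ_deriv : ∀ x : ℝ, HasDerivAt φu (φu' x) x)
    (hφ'_int : Integrable φu')
    (hxφ_int : Integrable fun x : ℝ => x * φu x)
    (Φ Φ' : ℝ → ℂ)
    (hΦ_deriv : ∀ l : ℝ, HasDerivAt Φ (Φ' l) l)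
    (hΦ' : ∀ l : ℝ,
      Φ' l = (↑(σ ^ 2 * l) : ℂ) -
        Complex.I * ∫ z : ℝ, Complex.exp (Complex.I * l * z) * (z : ℂ) ∂ν)
    (hfourier : ∀ l : ℝ,
      ∫ x : ℝ, Complex.exp (Complex.I * l * x) * (φu x : ℂ) =
        Complex.exp (-(u : ℂ) * Φ l)) :
    ∀ᵐ x : ℝ,
      -σ ^ 2 * φu' x + ∫ z : ℝ, z * φu (x - z) ∂ν = (x / u) * φu x := by
  have := sFinite_of_integrable_id hν_int
  have hνC : Integrable (fun z : ℝ => (z : ℂ)) ν := hν_int.ofReal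
  have hφC : Integrable fun x => (φu x : ℂ) := hφ_int.ofReal
  have hφ'C : Integrable fun x => (φu' x : ℂ) := hφ'_int.ofReal
  have hxφC : Integrable fun x : ℝ => (x : ℂ) * φu x := by exact_mod_cast hxφ_int.ofReal
  have hconvC : Integrable fun x => ∫ z, (z : ℂ) * φu (x - z) ∂ν :=
    (hνC.convolution_integrand (.mul ℂ ℂ) hφC).integral_prod_left
  have hzero (l : ℝ) : charTransform volume (fun x => -σ ^ 2 * (φu' x : ℂ) +
      (∫ z, (z : ℂ) * φu (x - z) ∂ν) - (u : ℂ)⁻¹ * (x * φu x)) l = 0 := by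
    rw [charTransform_sub (f := fun x => _ + _) ((hφ'C.const_mul _).add hconvC)
      (hxφC.const_mul _), charTransform_add (hφ'C.const_mul _) hconvC, charTransform_const_mul,
      charTransform_const_mul,
      charTransform_deriv hφC (fun x => (hφ_deriv x).ofReal_comp) hφ'C,
      charTransform_integral_mul_sub hνC hφC,
      charTransform_id_mul_of_eq_cexp hφC hxφC (fun l => (hΦ_deriv l).const_mul _) hfourier,
      show charTransform volume (fun x => (φu x : ℂ)) l = cexp (-u * Φ l) from hfourier l,
      show Φ' l = σ ^ 2 * l - I * charTransform ν (fun z => z) l by exact_mod_cast hΦ' l]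
    set M := charTransform ν (fun z => (z : ℂ)) l
    linear_combination (M * cexp (-u * Φ l)) * I_sq -
      (I * (σ ^ 2 * l - I * M) * cexp (-u * Φ l)) * inv_mul_cancel₀ (ofReal_ne_zero.mpr hu.ne')
  filter_upwards [ae_eq_zero_of_charTransform_eq_zero
    (((hφ'C.const_mul _).add hconvC).sub (hxφC.const_mul _)) hzero] with x hx
  have hx' : ((-σ ^ 2 * φu' x + (∫ z, z * φu (x - z) ∂ν) - x / u * φu x : ℝ) : ℂ) = 0 := by
    simp only [Pi.add_apply, Pi.sub_apply, Pi.zero_apply] at hx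
    rw [← hx]
    push_cast
    rw [← integral_complex_ofReal]
    push_cast
    field_simp
  linarith [ofReal_eq_zero.mp hx']

/-- The key Fourier identity for the marginal density of an integrable Lévy process with
local characteristics `(σ², ν)`: if `φ_u` is a differentiable probability density with
`∫ e^{iλx} φ_u(x) dx = e^{−uΦ(λ)}` where `Φ'(λ) = σ²λ − i∫ z e^{iλz} ν(dz)`, then for
Lebesgue-a.e. `x`, `−σ² φ'_u(x) + ∫ z φ_u(x − z) ν(dz) = (x/u) φ_u(x)`. -/
theorem levy_density_identity
    (σ : ℝ) (hσ : 0 ≤ σ)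
    (ν : Measure ℝ) (hν_zero : ν {0} = 0)
    (hν_int : Integrable (fun z : ℝ => z) ν)
    (u : ℝ) (hu : 0 < u)
    (φu φu' : ℝ → ℝ)
    (hφ_int : Integrable φu)
    (hφ_nonneg : ∀ x : ℝ, 0 ≤ φu x)
    (hφ_one : ∫ x : ℝ, φu x = 1)
    (hφ_deriv : ∀ x : ℝ, HasDerivAt φu (φu' x) x)
    (hφ'_int : Integrable φu')
    (hxφ_int : Integrable fun x : ℝ => x * φu x)
    (Φ Φ' : ℝ → ℂ)
    (hΦ_deriv : ∀ l : ℝ, HasDerivAt Φ (Φ' l) l)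
    (hΦ' : ∀ l : ℝ,
      Φ' l = (↑(σ ^ 2 * l) : ℂ) -
        Complex.I * ∫ z : ℝ, Complex.exp (Complex.I * l * z) * (z : ℂ) ∂ν)
    (hfourier : ∀ l : ℝ,
      ∫ x : ℝ, Complex.exp (Complex.I * l * x) * (φu x : ℂ) =
        Complex.exp (-(u : ℂ) * Φ l)) :
    ∀ᵐ x : ℝ,
      -σ ^ 2 * φu' x + ∫ z : ℝ, z * φu (x - z) ∂ν = (x / u) * φu x :=
  levy_density_identity_general σ ν hν_int u hu φu φu' hφ_int hφ_deriv hφ'_int hxφ_int Φ Φ' hΦ_deriv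
    hΦ' hfourier
end
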